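/- arXiv:1408.2166 — 6 statements merged into one kernel-verified Lean document; each statement's English description precedes it below -/
import Mathlib

section
/- Let T be a family of linear operators on a nonzero finite-dimensional vector space V over a field F such that the T-invariant subspaces of V form a chain under inclusion (T is uniserial). Suppose there is a basis of V relative to which every element of T is represented by an upper triangular matrix. Then for each position (i, i+1) on the first superdiagonal, there exists some element of T whose matrix has a nonzero entry at position (i, i+1). -/
/-!
If the superdiagonal entry at `(i, i + 1)` vanished for every element of `T`, then both the
coordinate subspace spanned by `b₀, …, bᵢ` and the one spanned by `b₀, …, bᵢ₋₁, bᵢ₊₁` would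
be `T`-invariant by triangularity. Neither contains the other, contradicting uniseriality.
-/

/-- A family of endomorphisms is uniserial if its invariant subspaces form a
chain under inclusion. -/
def IsUniserialFamily {F V : Type*} [Field F] [AddCommGroup V] [Module F V]
    (T : Set (Module.End F V)) : Prop :=
  IsChain (· ≤ ·) {W : Submodule F V | ∀ f ∈ T, W.map f ≤ W}

open Module Submodule

namespace Module.Basis

variable {R M ι : Type*} [CommSemiring R] [AddCommMonoid M] [Module R M]
  [Fintype ι] [DecidableEq ι] (b : Basis ι R M)

theorem map_span_image_le_of_toMatrix_eq_zero {f : Module.End R M} {S : Set ι}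
    (hf : ∀ k ∈ S, ∀ m ∉ S, LinearMap.toMatrix b b f m k = 0) :
    (span R (b '' S)).map f ≤ span R (b '' S) := by
  rw [map_span, ← Set.image_comp, span_le]
  rintro _ ⟨k, hk, rfl⟩
  refine b.mem_span_image.2 fun m hm => ?_
  by_contra hmS
  exact Finsupp.mem_support_iff.1 hm (by simpa [LinearMap.toMatrix_apply] using hf k hk m hmS)

variable [LinearOrder ι] {f : Module.End R M}
  (htri : (LinearMap.toMatrix b b f).BlockTriangular id)
include htri

theorem map_span_image_Iic_le_of_blockTriangular (i : ι) :
    (span R (b '' Set.Iic i)).map f ≤ span R (b '' Set.Iic i) :=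
  b.map_span_image_le_of_toMatrix_eq_zero fun _ hk _ hm => htri (hk.trans_lt (not_le.1 hm))

theorem map_span_image_Iic_diff_le_of_blockTriangular {i j : ι} (hij : i ⋖ j)
    (hzero : LinearMap.toMatrix b b f i j = 0) :
    (span R (b '' (Set.Iic j \ {i}))).map f ≤ span R (b '' (Set.Iic j \ {i})) := by
  refine b.map_span_image_le_of_toMatrix_eq_zero fun k ⟨hkj, hki⟩ m hm => ?_
  rcases le_or_gt m j with hmj | hjm
  · obtain rfl : m = i := by simpa [hmj] using hm
    rcases (Set.mem_Iic.1 hkj).lt_or_eq with hkj | rfl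
    · exact htri ((hij.le_of_lt hkj).lt_of_ne hki)
    · exact hzero
  · exact htri ((Set.mem_Iic.1 hkj).trans_lt hjm)

end Module.Basis

section Uniserial

variable {F V ι : Type*} [Field F] [AddCommGroup V] [Module F V] {T : Set (Module.End F V)}

theorem IsUniserialFamily.subset_or_subset_of_span_image (hT : IsUniserialFamily T)
    (b : Basis ι F V) {S S' : Set ι}
    (hS : ∀ f ∈ T, (span F (b '' S)).map f ≤ span F (b '' S))
    (hS' : ∀ f ∈ T, (span F (b '' S')).map f ≤ span F (b '' S')) :
    S ⊆ S' ∨ S' ⊆ S := by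
  rcases hT.total hS hS' with h | h
  · exact .inl fun k hk => b.self_mem_span_image.1 (h (b.self_mem_span_image.2 hk))
  · exact .inr fun k hk => b.self_mem_span_image.1 (h (b.self_mem_span_image.2 hk))

theorem IsUniserialFamily.exists_toMatrix_ne_zero_of_covBy [Fintype ι] [DecidableEq ι]
    [LinearOrder ι] (hT : IsUniserialFamily T) (b : Basis ι F V)
    (htri : ∀ f ∈ T, (LinearMap.toMatrix b b f).BlockTriangular id) {i j : ι} (hij : i ⋖ j) :
    ∃ f ∈ T, LinearMap.toMatrix b b f i j ≠ 0 := by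
  by_contra! hzero
  rcases hT.subset_or_subset_of_span_image b
      (fun f hf => b.map_span_image_Iic_le_of_blockTriangular (htri f hf) i)
      (fun f hf => b.map_span_image_Iic_diff_le_of_blockTriangular (htri f hf) hij
        (hzero f hf)) with h | h
  · exact (h (Set.mem_Iic.2 le_rfl)).2 rfl
  · exact hij.lt.not_ge (h ⟨Set.mem_Iic.2 le_rfl, hij.lt.ne'⟩)

end Uniserial

theorem stmt0_general {F V : Type*} [Field F] [AddCommGroup V] [Module F V]
    {n : ℕ} (b : Module.Basis (Fin n) F V)
    (T : Set (Module.End F V)) (hT : IsUniserialFamily T)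
    (htri : ∀ f ∈ T, (LinearMap.toMatrix b b f).BlockTriangular id)
    (i j : Fin n) (hij : (j : ℕ) = (i : ℕ) + 1) :
    ∃ f ∈ T, (LinearMap.toMatrix b b f) i j ≠ 0 :=
  hT.exists_toMatrix_ne_zero_of_covBy b htri
    (Fin.covBy_iff.2 (Order.covBy_iff_add_one_eq.2 hij.symm))

theorem stmt0 {F V : Type*} [Field F] [AddCommGroup V] [Module F V]
    [FiniteDimensional F V] {n : ℕ} (b : Module.Basis (Fin n) F V)
    (T : Set (Module.End F V)) (hT : IsUniserialFamily T)
    (htri : ∀ f ∈ T, (LinearMap.toMatrix b b f).BlockTriangular id)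
    (i j : Fin n) (hij : (j : ℕ) = (i : ℕ) + 1) :
    ∃ f ∈ T, (LinearMap.toMatrix b b f) i j ≠ 0 :=
  stmt0_general b T hT htri i j hij
end

section
/- Let A be an upper triangular m×m matrix over a field F. Then there exists an invertible upper triangular matrix P with all diagonal entries equal to 1 such that B = P^{-1} A P satisfies: whenever the diagonal entries B_{ii} and B_{jj} are distinct, the entry B_{ij} is zero. -/
/-!
The superdiagonals are cleared one at a time. If `B` is upper triangular, `N` vanishes below the
superdiagonal `d > 0` and `B' = (1 + N)⁻¹ * B * (1 + N)`, then `B' = B + B * N - N * B'`; hence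
`B'` agrees with `B` below that superdiagonal, and on it `B' i j = B i j + (B i i - B j j) * N i j`.
Taking `N i j = B i j / (B j j - B i i)` where the diagonal entries differ clears these entries
without touching the superdiagonals already cleared.
-/

namespace Matrix

variable {R : Type*} {m : ℕ}

def IsUpperOfDepth [Zero R] (d : ℕ) (M : Matrix (Fin m) (Fin m) R) : Prop :=
  ∀ i j : Fin m, (j : ℕ) < i + d → M i j = 0

section Ring

variable [Ring R] {a b d : ℕ} {M N : Matrix (Fin m) (Fin m) R}

theorem isUpperOfDepth_zero_iff : IsUpperOfDepth 0 M ↔ M.IsUpperTriangular :=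
  ⟨fun h _ _ hij => h _ _ hij, fun h _ _ hij => h hij⟩

theorem IsUpperOfDepth.mono (hab : a ≤ b) (hM : IsUpperOfDepth b M) : IsUpperOfDepth a M :=
  fun i j hij => hM i j (by omega)

theorem IsUpperOfDepth.add (hM : IsUpperOfDepth d M) (hN : IsUpperOfDepth d N) :
    IsUpperOfDepth d (M + N) := fun i j hij => by rw [add_apply, hM i j hij, hN i j hij, add_zero]

theorem IsUpperOfDepth.sub (hM : IsUpperOfDepth d M) (hN : IsUpperOfDepth d N) :
    IsUpperOfDepth d (M - N) := fun i j hij => by rw [sub_apply, hM i j hij, hN i j hij, sub_zero]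

theorem IsUpperOfDepth.mul (hM : IsUpperOfDepth a M) (hN : IsUpperOfDepth b N) :
    IsUpperOfDepth (a + b) (M * N) := fun i j hij => by
  rw [mul_apply]
  refine Finset.sum_eq_zero fun r _ => ?_
  rcases lt_or_ge (r : ℕ) (i + a) with hr | hr
  · rw [hM i r hr, zero_mul]
  · rw [hN r j (by omega), mul_zero]

theorem mul_apply_eq_diag_mul_of_isUpperOfDepth (hM : IsUpperOfDepth 0 M)
    (hN : IsUpperOfDepth d N) {i j : Fin m} (hij : (j : ℕ) ≤ i + d) :
    (M * N) i j = M i i * N i j := by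
  rw [mul_apply]
  refine Finset.sum_eq_single i (fun r _ hr => ?_) (by simp)
  rcases lt_or_gt_of_ne hr with hr | hr
  · rw [hM i r (by simpa using hr), zero_mul]
  · rw [hN r j (by omega), mul_zero]

theorem mul_apply_eq_mul_diag_of_isUpperOfDepth (hM : IsUpperOfDepth d M)
    (hN : IsUpperOfDepth 0 N) {i j : Fin m} (hij : (j : ℕ) ≤ i + d) :
    (M * N) i j = M i j * N j j := by
  rw [mul_apply]
  refine Finset.sum_eq_single j (fun r _ hr => ?_) (by simp)
  rcases lt_or_gt_of_ne hr with hr | hr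
  · rw [hM i r (by omega), zero_mul]
  · rw [hN r j (by simpa using hr), mul_zero]

theorem IsUpperOfDepth.apply_self_eq (h : IsUpperOfDepth 1 (M - N)) (i : Fin m) :
    M i i = N i i :=
  sub_eq_zero.mp (h i i (by omega))

theorem isUpperOfDepth_one_sub_one_iff :
    IsUpperOfDepth 1 (M - 1) ↔ M.IsUpperTriangular ∧ ∀ i, M i i = 1 := by
  refine ⟨fun h => ⟨fun i j hij => ?_, fun i => by simpa using h.apply_self_eq i⟩,
    fun ⟨hM, hdiag⟩ i j hij => ?_⟩
  · have hne : i ≠ j := (ne_of_lt hij).symm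
    simpa [one_apply_ne hne] using h i j (by simp at hij; omega)
  · rcases (Nat.lt_succ_iff.mp hij).lt_or_eq with hij | hij
    · have hne : i ≠ j := fun h => by subst h; omega
      simp [hM hij, one_apply_ne hne]
    · simp [Fin.ext hij, hdiag]

theorem IsUpperOfDepth.isUpperTriangular_of_sub_one (h : IsUpperOfDepth 1 (M - 1)) :
    M.IsUpperTriangular :=
  (isUpperOfDepth_one_sub_one_iff.mp h).1

theorem IsUpperOfDepth.mul_sub_one (hM : IsUpperOfDepth 1 (M - 1))
    (hN : IsUpperOfDepth 1 (N - 1)) : IsUpperOfDepth 1 (M * N - 1) := by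
  have h : M * N - 1 = (M - 1) * (N - 1) + (M - 1) + (N - 1) := by noncomm_ring
  rw [h]
  exact (((hM.mul hN).mono (by omega)).add hM).add hN

end Ring

theorem IsUpperOfDepth.isUnit_of_sub_one [CommRing R] {M : Matrix (Fin m) (Fin m) R}
    (h : IsUpperOfDepth 1 (M - 1)) : IsUnit M := by
  obtain ⟨hM, hdiag⟩ := isUpperOfDepth_one_sub_one_iff.mp h
  rw [isUnit_iff_isUnit_det, det_of_isUpperTriangular hM]
  simp [hdiag]

section Field

variable {F : Type*} [Field F]

theorem exists_conj_apply_eq_zero_of_eq_add {d : ℕ} (hd : 0 < d)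
    {B : Matrix (Fin m) (Fin m) F} (hB : IsUpperOfDepth 0 B) :
    ∃ Q : Matrix (Fin m) (Fin m) F, IsUpperOfDepth 1 (Q - 1) ∧
      IsUpperOfDepth d (Q⁻¹ * B * Q - B) ∧
      ∀ i j : Fin m, (j : ℕ) = i + d → B i i ≠ B j j → (Q⁻¹ * B * Q) i j = 0 := by
  classical
  set N : Matrix (Fin m) (Fin m) F := fun i j =>
    if (j : ℕ) = i + d ∧ B i i ≠ B j j then B i j / (B j j - B i i) else 0
  have hN : IsUpperOfDepth d N := fun i j hij => if_neg (by omega)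
  have hQ : IsUpperOfDepth 1 (1 + N - 1) := by simpa using hN.mono hd
  have := invertibleOfIsUnitDet _ ((isUnit_iff_isUnit_det _).mp hQ.isUnit_of_sub_one)
  set B' := (1 + N)⁻¹ * B * (1 + N)
  have hB' : IsUpperOfDepth 0 B' := isUpperOfDepth_zero_iff.mpr <|
    ((blockTriangular_inv_of_blockTriangular hQ.isUpperTriangular_of_sub_one).mul
      (isUpperOfDepth_zero_iff.mp hB)).mul hQ.isUpperTriangular_of_sub_one
  have hconj : (1 + N) * B' = B * (1 + N) := by
    simp only [B', ← Matrix.mul_assoc, mul_inv_of_invertible, Matrix.one_mul]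
  have hdiff : B' - B = B * N - N * B' := by
    calc B' - B = (1 + N) * B' - N * B' - B := by noncomm_ring
      _ = B * N - N * B' := by rw [hconj]; noncomm_ring
  have hdepth : IsUpperOfDepth d (B' - B) :=
    hdiff ▸ ((hB.mul hN).mono (by omega)).sub ((hN.mul hB').mono (by omega))
  refine ⟨1 + N, hQ, hdepth, fun i j hij hne => ?_⟩
  have hentry : B' i j = B i j + B i i * N i j - N i j * B' j j := by
    rw [← mul_apply_eq_diag_mul_of_isUpperOfDepth hB hN hij.le,
      ← mul_apply_eq_mul_diag_of_isUpperOfDepth hN hB' hij.le, add_sub_assoc,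
      ← Matrix.sub_apply, ← hdiff, Matrix.sub_apply, add_sub_cancel]
  have hjj : B' j j = B j j := sub_eq_zero.mp (hdepth j j (by omega))
  have hNij : N i j = B i j / (B j j - B i i) := if_pos ⟨hij, hne⟩
  have hsub : B j j - B i i ≠ 0 := sub_ne_zero.mpr hne.symm
  change B' i j = 0
  rw [hentry, hjj, hNij]
  field_simp
  ring

theorem exists_conj_apply_eq_zero_of_le_add {A : Matrix (Fin m) (Fin m) F}
    (hA : IsUpperOfDepth 0 A) (n : ℕ) :
    ∃ P : Matrix (Fin m) (Fin m) F, IsUpperOfDepth 1 (P - 1) ∧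
      IsUpperOfDepth 1 (P⁻¹ * A * P - A) ∧
      ∀ i j : Fin m, (j : ℕ) ≤ i + n → A i i ≠ A j j → (P⁻¹ * A * P) i j = 0 := by
  induction n with
  | zero =>
    refine ⟨1, by simp [IsUpperOfDepth], by simp [IsUpperOfDepth], fun i j hij hne => ?_⟩
    obtain hij | hij : (j : ℕ) < i ∨ (j : ℕ) = i := by omega
    · simpa using hA i j (by simpa using hij)
    · exact absurd (by rw [Fin.ext hij]) hne
  | succ n ih =>
    obtain ⟨P, hP, hPA, hclear⟩ := ih
    set B := P⁻¹ * A * P with hB_def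
    have hB : IsUpperOfDepth 0 B := by simpa using (hPA.mono (Nat.zero_le 1)).add hA
    obtain ⟨Q, hQ, hQB, hQclear⟩ := exists_conj_apply_eq_zero_of_eq_add n.succ_pos hB
    have hconj : (P * Q)⁻¹ * A * (P * Q) = Q⁻¹ * B * Q := by
      simp only [Matrix.mul_inv_rev, hB_def, Matrix.mul_assoc]
    refine ⟨P * Q, hP.mul_sub_one hQ, ?_, fun i j hij hne => ?_⟩
    · rw [hconj, ← sub_add_sub_cancel _ B]
      exact (hQB.mono (by omega)).add hPA
    · rw [hconj]
      rcases hij.lt_or_eq with hij | hij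
      · rw [← sub_add_cancel (Q⁻¹ * B * Q) B, Matrix.add_apply, hQB i j (by omega), zero_add]
        exact hclear i j (by omega) hne
      · exact hQclear i j (by omega) (by rwa [hPA.apply_self_eq, hPA.apply_self_eq])

end Field

end Matrix

theorem stmt4_general {F : Type*} [Field F] {m : ℕ}
    (A : Matrix (Fin m) (Fin m) F) (hA : A.BlockTriangular id) :
    ∃ P : Matrix (Fin m) (Fin m) F, IsUnit P ∧ P.BlockTriangular id ∧
      (∀ i, P i i = 1) ∧
      ∀ i j, (P⁻¹ * A * P) i i ≠ (P⁻¹ * A * P) j j → (P⁻¹ * A * P) i j = 0 := by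
  obtain ⟨P, hP, hPA, hclear⟩ :=
    Matrix.exists_conj_apply_eq_zero_of_le_add (Matrix.isUpperOfDepth_zero_iff.mpr hA) m
  obtain ⟨hP_tri, hP_diag⟩ := Matrix.isUpperOfDepth_one_sub_one_iff.mp hP
  refine ⟨P, hP.isUnit_of_sub_one, hP_tri, hP_diag, fun i j hne => hclear i j (by omega) ?_⟩
  rwa [hPA.apply_self_eq, hPA.apply_self_eq] at hne

theorem stmt4 {F : Type*} [Field F] {m : ℕ} (hm : 0 < m)
    (A : Matrix (Fin m) (Fin m) F) (hA : A.BlockTriangular id) :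
    ∃ P : Matrix (Fin m) (Fin m) F, IsUnit P ∧ P.BlockTriangular id ∧
      (∀ i, P i i = 1) ∧
      ∀ i j, (P⁻¹ * A * P) i i ≠ (P⁻¹ * A * P) j j → (P⁻¹ * A * P) i j = 0 :=
  stmt4_general A hA
end

section
/- Let F be an algebraically closed field and let A_1, ..., A_n be commuting upper triangular m×m matrices forming a uniserial family of operators on F^m. Then for each j, all diagonal entries of A_j are equal (A_j has a single eigenvalue). -/
/-!
An endomorphism `f` commuting with a uniserial family `T` has its eigenspaces invariant
under `T`. Eigenspaces for distinct eigenvalues are disjoint, whereas any two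
`T`-invariant subspaces are comparable, so `f` has at most one eigenvalue. Each diagonal
entry of a triangular matrix is an eigenvalue.
-/

theorem Matrix.IsUpperTriangular.hasEigenvalue_toLin'_diag {R n : Type*} [CommRing R]
    [IsDomain R] [Fintype n] [DecidableEq n] [LinearOrder n] {M : Matrix n n R}
    (hM : M.IsUpperTriangular) (i : n) : Module.End.HasEigenvalue M.toLin' (M i i) := by
  rw [Module.End.hasEigenvalue_iff_isRoot_charpoly, Matrix.charpoly_toLin',
    M.charpoly_of_isUpperTriangular hM, Polynomial.IsRoot, Polynomial.eval_prod]
  exact Finset.prod_eq_zero (Finset.mem_univ i) (by simp)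

namespace IsUniserialFamily

variable {F V : Type*} [Field F] [AddCommGroup V] [Module F V] {T : Set (Module.End F V)}

theorem eq_of_hasEigenvalue (hT : IsUniserialFamily T) {f : Module.End F V}
    (hf : ∀ g ∈ T, Commute f g) {μ ν : F} (hμ : f.HasEigenvalue μ)
    (hν : f.HasEigenvalue ν) : μ = ν := by
  by_contra hne
  have hinv : ∀ c, ∀ g ∈ T, (f.eigenspace c).map g ≤ f.eigenspace c := fun c g hg =>
    Submodule.map_le_iff_le_comap.2 fun _ hx => f.mapsTo_genEigenspace_of_comm (hf g hg) c 1 hx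
  have hdisj : Disjoint (f.eigenspace μ) (f.eigenspace ν) := f.disjoint_genEigenspace hne 1 1
  rcases hT.total (hinv μ) (hinv ν) with h | h
  · exact Module.End.hasEigenvalue_iff.1 hμ (hdisj.eq_bot_of_le h)
  · exact Module.End.hasEigenvalue_iff.1 hν (hdisj.symm.eq_bot_of_le h)

end IsUniserialFamily

theorem stmt6_general {F : Type*} [Field F] {m n : ℕ}
    (A : Fin n → Matrix (Fin m) (Fin m) F)
    (hcomm : ∀ i j, A i * A j = A j * A i)
    (htri : ∀ j, (A j).BlockTriangular id)
    (hT : IsUniserialFamily {f : Module.End F (Fin m → F) |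
      ∃ j, f = Matrix.toLin' (A j)}) :
    ∀ j (i i' : Fin m), A j i i = A j i' i' := by
  intro j i i'
  have hcomm' : ∀ g ∈ {f : Module.End F (Fin m → F) | ∃ j, f = Matrix.toLin' (A j)},
      Commute (Matrix.toLin' (A j)) g := by
    rintro _ ⟨k, rfl⟩
    exact Commute.map (hcomm j k) Matrix.toLinAlgEquiv'
  exact hT.eq_of_hasEigenvalue hcomm'
    (Matrix.IsUpperTriangular.hasEigenvalue_toLin'_diag (htri j) i)
    (Matrix.IsUpperTriangular.hasEigenvalue_toLin'_diag (htri j) i')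

theorem stmt6 {F : Type*} [Field F] [IsAlgClosed F] {m n : ℕ} (hm : 1 ≤ m)
    (A : Fin n → Matrix (Fin m) (Fin m) F)
    (hcomm : ∀ i j, A i * A j = A j * A i)
    (htri : ∀ j, (A j).BlockTriangular id)
    (hT : IsUniserialFamily {f : Module.End F (Fin m → F) |
      ∃ j, f = Matrix.toLin' (A j)}) :
    ∀ j (i i' : Fin m), A j i i = A j i' i' :=
  stmt6_general A hcomm htri hT
end

section
/- Let F be a field, J = J_m(0), D = diag(α, α−1, ..., α−(m−1)), and let G be the group of matrices I + f(J) where f ranges over polynomials with zero constant term. If T ∈ G and E = T D T^{-1}, then E = D + f(J) for some polynomial f with no constant term; in particular the set Y = {D + f(J) : f has no constant term} is stable under conjugation by G. -/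
/-!
Write `J` for the nilpotent Jordan block and `D` for the diagonal matrix. The commutator relation
`D * J - J * D = J` makes `p ↦ D * p(J) - p(J) * D` the Euler operator `p ↦ X * p'` on polynomials
in `J`. Since `J` is nilpotent, `T = 1 + f(J)` is inverted by the truncated geometric series in
`-f(J)`, itself a polynomial in `J`; hence `T * D * T⁻¹ = D - (X * f')(J) * T⁻¹` differs from `D`
by a polynomial in `J` without constant term.
-/

/-- The m×m upper triangular Jordan block with eigenvalue α. -/
def jordanBlock {F : Type*} [Field F] (m : ℕ) (α : F) :
    Matrix (Fin m) (Fin m) F :=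
  fun i j => if (i : ℕ) + 1 = (j : ℕ) then 1 else if i = j then α else 0

open Polynomial

theorem aeval_pow_eq_zero_of_coeff_zero_eq_zero {R A : Type*} [CommSemiring R] [Semiring A]
    [Algebra R A] {a : A} {n : ℕ} (ha : a ^ n = 0) {f : R[X]} (hf : f.coeff 0 = 0) :
    aeval a f ^ n = 0 := by
  obtain ⟨q, rfl⟩ : X ∣ f := X_dvd_iff.mpr hf
  rw [← map_pow, mul_pow, map_mul, map_pow, aeval_X, ha, zero_mul]

section

variable {R A : Type*} [CommRing R] [Ring A] [Algebra R A]

theorem sub_aeval_mul_eq_aeval_X_mul_derivative {a d : A} (h : d * a - a * d = a) (p : R[X]) :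
    d * aeval a p - aeval a p * d = aeval a (X * derivative p) := by
  induction p using Polynomial.induction_on with
  | C c => simp [Algebra.commutes]
  | add p q hp hq =>
    simp only [map_add, mul_add, add_mul]
    rw [← hp, ← hq]
    abel
  | monomial n c ih =>
    have hX : X * derivative (C c * X ^ (n + 1)) =
        X * derivative (C c * X ^ n) * X + C c * X ^ n * X := by
      rw [pow_succ, ← mul_assoc, derivative_mul, derivative_X]
      ring
    calc d * aeval a (C c * X ^ (n + 1)) - aeval a (C c * X ^ (n + 1)) * d
        = (d * aeval a (C c * X ^ n) - aeval a (C c * X ^ n) * d) * a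
            + aeval a (C c * X ^ n) * (d * a - a * d) := by
          simp only [pow_succ, ← mul_assoc, map_mul (aeval a) _ X, aeval_X]
          noncomm_ring
      _ = aeval a (X * derivative (C c * X ^ (n + 1))) := by
          rw [ih, h, hX]
          simp

theorem one_add_aeval_mul_aeval_geom_sum {a : A} {f : R[X]} {n : ℕ} (hn : aeval a f ^ n = 0) :
    (1 + aeval a f) * aeval a (∑ k ∈ Finset.range n, (-f) ^ k) = 1 := by
  have h := mul_neg_geom_sum (-aeval a f) n
  rw [sub_neg_eq_add, neg_pow, hn, mul_zero, sub_zero] at h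
  rw [map_sum]
  simpa only [map_pow, map_neg] using h

end

section JordanBlock

variable {F : Type*} [Field F] {m : ℕ}

theorem jordanBlock_zero_apply (i j : Fin m) :
    jordanBlock m (0 : F) i j = if (i : ℕ) + 1 = j then 1 else 0 := by
  unfold jordanBlock
  split_ifs <;> rfl

theorem jordanBlock_zero_pow_apply_of_lt {k : ℕ} {i j : Fin m} (h : (j : ℕ) < i + k) :
    (jordanBlock m (0 : F) ^ k) i j = 0 := by
  induction k generalizing j with
  | zero => exact Matrix.one_apply_ne (by rintro rfl; omega)
  | succ k ih =>
    rw [pow_succ, Matrix.mul_apply]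
    refine Finset.sum_eq_zero fun l _ => ?_
    rw [jordanBlock_zero_apply]
    split_ifs with hl
    · rw [ih (by omega), zero_mul]
    · rw [mul_zero]

theorem jordanBlock_zero_pow_self : jordanBlock m (0 : F) ^ m = 0 := by
  ext i j
  exact jordanBlock_zero_pow_apply_of_lt (by omega)

theorem diagonal_mul_jordanBlock_zero_sub (α : F) :
    Matrix.diagonal (fun i : Fin m => α - (i : ℕ)) * jordanBlock m 0
      - jordanBlock m 0 * Matrix.diagonal (fun i : Fin m => α - (i : ℕ)) = jordanBlock m 0 := by
  ext i j
  rw [Matrix.sub_apply, Matrix.mul_diagonal, Matrix.diagonal_mul, jordanBlock_zero_apply]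
  split_ifs with h
  · rw [← h]
    push_cast
    ring
  · ring

end JordanBlock

theorem Matrix.exists_conj_one_add_aeval_eq_add_aeval {n R : Type*} [Fintype n] [DecidableEq n]
    [CommRing R] {J D : Matrix n n R} {k : ℕ} (hJ : J ^ k = 0) (hDJ : D * J - J * D = J)
    {f : R[X]} (hf : f.coeff 0 = 0) :
    ∃ g : R[X], g.coeff 0 = 0 ∧ (1 + aeval J f) * D * (1 + aeval J f)⁻¹ = D + aeval J g := by
  set T := 1 + aeval J f
  set s := ∑ i ∈ Finset.range k, (-f) ^ i
  have hTs : T * aeval J s = 1 :=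
    one_add_aeval_mul_aeval_geom_sum (aeval_pow_eq_zero_of_coeff_zero_eq_zero hJ hf)
  have hDT : D * T - T * D = aeval J (X * derivative f) := by
    rw [← sub_aeval_mul_eq_aeval_X_mul_derivative hDJ, mul_one_add, one_add_mul]
    abel
  refine ⟨-(X * derivative f * s), by simp, ?_⟩
  calc T * D * T⁻¹ = (D * T - (D * T - T * D)) * T⁻¹ := by rw [sub_sub_cancel]
    _ = D + aeval J (-(X * derivative f * s)) := by
      rw [Matrix.inv_eq_right_inv hTs, hDT, sub_mul, mul_assoc, hTs, mul_one]
      simp only [map_neg, map_mul]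
      abel

theorem stmt9_general {F : Type*} [Field F] {m : ℕ} (α : F)
    (f : Polynomial F) (hf : f.coeff 0 = 0) :
    letI J : Matrix (Fin m) (Fin m) F := jordanBlock m 0
    letI D : Matrix (Fin m) (Fin m) F :=
      Matrix.diagonal (fun i : Fin m => α - (i : ℕ))
    letI T : Matrix (Fin m) (Fin m) F := 1 + Polynomial.aeval J f
    ∃ g : Polynomial F, g.coeff 0 = 0 ∧
      T * D * T⁻¹ = D + Polynomial.aeval J g :=
  Matrix.exists_conj_one_add_aeval_eq_add_aeval jordanBlock_zero_pow_self
    (diagonal_mul_jordanBlock_zero_sub α) hf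

theorem stmt9 {F : Type*} [Field F] {m : ℕ} (hm : 1 ≤ m) (α : F)
    (f : Polynomial F) (hf : f.coeff 0 = 0) :
    letI J : Matrix (Fin m) (Fin m) F := jordanBlock m 0
    letI D : Matrix (Fin m) (Fin m) F :=
      Matrix.diagonal (fun i : Fin m => α - (i : ℕ))
    letI T : Matrix (Fin m) (Fin m) F := 1 + Polynomial.aeval J f
    ∃ g : Polynomial F, g.coeff 0 = 0 ∧
      T * D * T⁻¹ = D + Polynomial.aeval J g :=
  stmt9_general α f hf
end

section
/- Let F have prime characteristic p, J = J_m(0), and D = diag(α, α−1, ..., α−(m−1)). The stabilizer of D in the group G = {I + f(J) : f(0)=0} under conjugation consists exactly of the matrices I + h(J^p) where h ∈ F[X] has no constant term. In particular, if p ≥ m this stabilizer is trivial. -/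
open Polynomial

theorem Matrix.mul_diagonal_eq_diagonal_mul_iff {n R : Type*} [Fintype n] [DecidableEq n]
    [CommRing R] {d : n → R} {T : Matrix n n R} :
    T * diagonal d = diagonal d * T ↔ ∀ i j, (d j - d i) * T i j = 0 := by
  rw [← Matrix.ext_iff]
  refine forall₂_congr fun i j => ?_
  rw [mul_diagonal, diagonal_mul, sub_mul, sub_eq_zero, mul_comm]

namespace jordanBlock

variable {F : Type*} [Field F] {m : ℕ}

theorem zero_pow_apply (k : ℕ) (i j : Fin m) :
    (jordanBlock m (0 : F) ^ k) i j = if (i : ℕ) + k = j then 1 else 0 := by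
  induction k generalizing i with
  | zero => simp [Matrix.one_apply, Fin.ext_iff]
  | succ k ih =>
    rw [pow_succ', Matrix.mul_apply]
    simp only [ih, jordanBlock, mul_ite, mul_one, mul_zero, ite_self]
    by_cases hi : (i : ℕ) + 1 < m
    · rw [Fintype.sum_eq_single ⟨i + 1, hi⟩ fun b hb => by
        have : (b : ℕ) ≠ i + 1 := fun h => hb (Fin.ext h)
        split_ifs <;> first | rfl | omega]
      simp only [if_true]
      congr 1; apply propext; omega
    · rw [Finset.sum_eq_zero fun b _ => by split_ifs <;> first | rfl | omega, if_neg (by omega)]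

theorem aeval_zero_apply (f : F[X]) (i j : Fin m) :
    aeval (jordanBlock m (0 : F)) f i j = if (i : ℕ) ≤ j then f.coeff (j - i) else 0 := by
  rw [aeval_eq_sum_range, Matrix.sum_apply]
  simp only [Matrix.smul_apply, zero_pow_apply, smul_eq_mul, mul_ite, mul_one, mul_zero]
  split_ifs with hij
  · simp_rw [show ∀ n : ℕ, ((i : ℕ) + n = j ↔ n = j - i) from fun n => by omega]
    rw [Finset.sum_ite_eq', ite_eq_left_iff, Finset.mem_range, not_lt]
    exact fun h => (coeff_eq_zero_of_natDegree_lt (by omega)).symm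
  · exact Finset.sum_eq_zero fun n _ => if_neg (by omega)

theorem zero_pow_eq_zero {k : ℕ} (hk : m ≤ k) : jordanBlock m (0 : F) ^ k = 0 := by
  ext i j
  rw [zero_pow_apply, if_neg (by omega), Matrix.zero_apply]

theorem aeval_zero_eq_aeval_zero_iff {f g : F[X]} :
    aeval (jordanBlock m (0 : F)) f = aeval (jordanBlock m (0 : F)) g ↔
      ∀ k < m, f.coeff k = g.coeff k := by
  simp only [← Matrix.ext_iff, aeval_zero_apply]
  refine ⟨fun h k hk => by simpa using h ⟨0, by omega⟩ ⟨k, hk⟩, fun h i j => ?_⟩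
  split_ifs
  exacts [h _ (by omega), rfl]

theorem aeval_zero_mul_diagonal_eq_iff (α : F) (f : F[X]) :
    aeval (jordanBlock m (0 : F)) f * Matrix.diagonal (fun i : Fin m => α - (i : ℕ)) =
        Matrix.diagonal (fun i : Fin m => α - (i : ℕ)) * aeval (jordanBlock m (0 : F)) f ↔
      ∀ k < m, (k : F) * f.coeff k = 0 := by
  simp only [Matrix.mul_diagonal_eq_diagonal_mul_iff, aeval_zero_apply]
  constructor
  · intro h k hk
    simpa using h ⟨0, by omega⟩ ⟨k, hk⟩
  · intro h i j
    split_ifs with hij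
    · have := h (j - i) (by omega)
      rw [Nat.cast_sub hij] at this
      linear_combination -this
    · exact mul_zero _

theorem aeval_zero_mul_diagonal_eq_iff_eq_aeval_pow_contract {p : ℕ} [CharP F p] (hp : p ≠ 0)
    (α : F) (f : F[X]) :
    aeval (jordanBlock m (0 : F)) f * Matrix.diagonal (fun i : Fin m => α - (i : ℕ)) =
        Matrix.diagonal (fun i : Fin m => α - (i : ℕ)) * aeval (jordanBlock m (0 : F)) f ↔
      aeval (jordanBlock m (0 : F)) f = aeval (jordanBlock m (0 : F) ^ p) (contract p f) := by
  rw [aeval_zero_mul_diagonal_eq_iff, ← expand_aeval, aeval_zero_eq_aeval_zero_iff]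
  refine forall₂_congr fun k _ => ?_
  rw [coeff_expand hp.bot_lt, coeff_contract hp]
  by_cases hpk : p ∣ k
  · rw [if_pos hpk, Nat.div_mul_cancel hpk, (CharP.cast_eq_zero_iff F p k).mpr hpk, zero_mul]
    exact iff_of_true rfl rfl
  · rw [if_neg hpk, mul_eq_zero, or_iff_right (mt (CharP.cast_eq_zero_iff F p k).mp hpk)]

end jordanBlock

open jordanBlock

theorem stmt11_general {F : Type*} [Field F] {p : ℕ} [Fact p.Prime] [CharP F p]
    {m : ℕ} (α : F) :
    letI J : Matrix (Fin m) (Fin m) F := jordanBlock m 0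
    letI D : Matrix (Fin m) (Fin m) F :=
      Matrix.diagonal (fun i : Fin m => α - (i : ℕ))
    ({T : Matrix (Fin m) (Fin m) F | ∃ f : Polynomial F, f.coeff 0 = 0 ∧
        T = 1 + Polynomial.aeval J f ∧ T * D = D * T} =
      {T : Matrix (Fin m) (Fin m) F | ∃ h : Polynomial F, h.coeff 0 = 0 ∧
        T = 1 + Polynomial.aeval (J ^ p) h}) ∧
    (p ≥ m →
      {T : Matrix (Fin m) (Fin m) F | ∃ f : Polynomial F, f.coeff 0 = 0 ∧
        T = 1 + Polynomial.aeval J f ∧ T * D = D * T} = {1}) := by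
  set J := jordanBlock m (0 : F)
  set D := Matrix.diagonal (fun i : Fin m => α - (i : ℕ))
  have hp : p ≠ 0 := (Fact.out : p.Prime).ne_zero
  have commutes_one_add_iff (A : Matrix (Fin m) (Fin m) F) :
      (1 + A) * D = D * (1 + A) ↔ A * D = D * A := by
    rw [add_mul, mul_add, one_mul, mul_one, add_right_inj]
  have stabilizer : {T | ∃ f : F[X], f.coeff 0 = 0 ∧ T = 1 + aeval J f ∧ T * D = D * T} =
      {T | ∃ h : F[X], h.coeff 0 = 0 ∧ T = 1 + aeval (J ^ p) h} := by
    ext T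
    constructor
    · rintro ⟨f, hf0, rfl, hcomm⟩
      rw [commutes_one_add_iff, aeval_zero_mul_diagonal_eq_iff_eq_aeval_pow_contract hp] at hcomm
      exact ⟨contract p f, by rwa [coeff_contract hp, zero_mul], by rw [hcomm]⟩
    · rintro ⟨h, hh0, rfl⟩
      refine ⟨expand F p h, by rwa [coeff_expand hp.bot_lt, if_pos (dvd_zero p), Nat.zero_div],
        by rw [expand_aeval], ?_⟩
      rw [commutes_one_add_iff, ← expand_aeval,
        aeval_zero_mul_diagonal_eq_iff_eq_aeval_pow_contract hp, contract_expand p hp, expand_aeval]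
  refine ⟨stabilizer, fun hpm => ?_⟩
  rw [stabilizer, Set.eq_singleton_iff_unique_mem]
  refine ⟨⟨0, coeff_zero 0, by rw [aeval_zero, add_zero]⟩, ?_⟩
  rintro T ⟨h, hh0, rfl⟩
  rw [zero_pow_eq_zero hpm, ← coeff_zero_eq_aeval_zero', hh0, map_zero, add_zero]

theorem stmt11 {F : Type*} [Field F] {p : ℕ} [Fact p.Prime] [CharP F p]
    {m : ℕ} (hm : 1 ≤ m) (α : F) :
    letI J : Matrix (Fin m) (Fin m) F := jordanBlock m 0
    letI D : Matrix (Fin m) (Fin m) F :=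
      Matrix.diagonal (fun i : Fin m => α - (i : ℕ))
    ({T : Matrix (Fin m) (Fin m) F | ∃ f : Polynomial F, f.coeff 0 = 0 ∧
        T = 1 + Polynomial.aeval J f ∧ T * D = D * T} =
      {T : Matrix (Fin m) (Fin m) F | ∃ h : Polynomial F, h.coeff 0 = 0 ∧
        T = 1 + Polynomial.aeval (J ^ p) h}) ∧
    (p ≥ m →
      {T : Matrix (Fin m) (Fin m) F | ∃ f : Polynomial F, f.coeff 0 = 0 ∧
        T = 1 + Polynomial.aeval J f ∧ T * D = D * T} = {1}) :=
  stmt11_general α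
end

section
/- Let F have prime characteristic p, D = diag(α, α−1, ..., α−(m−1)) and J = J_m(0) with m > p. The eigenvalues of ad D acting on F[J] are exactly the elements of the prime subfield F_p of F, and for 0 ≤ i < p the eigenspace for eigenvalue i (viewed in F_p) is F[J^p]·J^i = {h(J^p) J^i : h ∈ F[X]}. -/
/-!
Write `J = jordanBlock m 0` and `D = diag(α - k)`. The entry `(i, j)` of `q(J)` is the coefficient
of `X ^ (j - i)` in `q`, and `ad D` multiplies the entry `(i, j)` of any matrix by `j - i`. Hence
`q(J)` is an eigenvector of `ad D` for `c` exactly when every coefficient of `X ^ k`, `k < m`, that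
survives in `q` satisfies `k = c` in `F`. In characteristic `p` this forces `c ∈ 𝔽_p`, and for
`c = i < p` it says that `q` is supported, below degree `m`, on exponents `k ≡ i [MOD p]`, i.e.
`q(J) = h(J ^ p) J ^ i`.
-/

open Polynomial

namespace Polynomial

variable {R : Type*} [CommSemiring R]

theorem coeff_divX_iterate (f : R[X]) (n k : ℕ) : (divX^[n] f).coeff k = f.coeff (k + n) := by
  induction n generalizing k with
  | zero => rfl
  | succ n ih => rw [Function.iterate_succ_apply', coeff_divX, ih, add_right_comm, add_assoc]

theorem coeff_expand_mul_X_pow {p i : ℕ} (hi : i < p) (h : R[X]) (k : ℕ) :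
    (expand R p h * X ^ i).coeff k = if k % p = i then h.coeff (k / p) else 0 := by
  have hp : 0 < p := i.zero_le.trans_lt hi
  have hk := Nat.div_add_mod k p
  rw [coeff_mul_X_pow', coeff_expand hp]
  by_cases hik : k % p = i
  · have hsub : k - i = p * (k / p) := by omega
    rw [if_pos (by omega), hsub, if_pos (dvd_mul_right _ _), if_pos hik,
      Nat.mul_div_cancel_left _ hp]
  · rw [if_neg hik]
    split_ifs with hle hdvd
    · obtain ⟨c, hc⟩ := hdvd
      refine absurd ?_ hik
      rw [show k = i + p * c by omega, Nat.add_mul_mod_self_left, Nat.mod_eq_of_lt hi]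
    · rfl
    · rfl

theorem coeff_expand_contract_divX_iterate_mul_X_pow {p i : ℕ} (hi : i < p) (f : R[X]) (k : ℕ) :
    (expand R p (contract p (divX^[i] f)) * X ^ i).coeff k =
      if k % p = i then f.coeff k else 0 := by
  rw [coeff_expand_mul_X_pow hi, coeff_contract (i.zero_le.trans_lt hi).ne', coeff_divX_iterate]
  split_ifs with hik
  · rw [← hik, mul_comm, Nat.div_add_mod]
  · rfl

theorem aeval_pow_mul_pow_eq_aeval_expand_mul_X_pow {A : Type*} [Semiring A] [Algebra R A]
    (a : A) (p i : ℕ) (h : R[X]) :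
    aeval (a ^ p) h * a ^ i = aeval a (expand R p h * X ^ i) := by
  rw [map_mul, expand_aeval, map_pow, aeval_X]

end Polynomial

namespace Matrix

theorem diagonal_mul_sub_mul_diagonal_apply {n R : Type*} [Fintype n] [DecidableEq n] [CommRing R]
    (d : n → R) (A : Matrix n n R) (i j : n) :
    (diagonal d * A - A * diagonal d) i j = (d i - d j) * A i j := by
  rw [sub_apply, diagonal_mul, mul_diagonal, sub_mul, mul_comm (A i j)]

end Matrix

theorem CharP.natCast_eq_natCast_iff_mod_eq {R : Type*} [AddGroupWithOne R] (p : ℕ) [CharP R p]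
    {i k : ℕ} (hi : i < p) : (k : R) = i ↔ k % p = i := by
  rw [CharP.natCast_eq_natCast R p, Nat.ModEq, Nat.mod_eq_of_lt hi]

section JordanBlock

variable {F : Type*} [Field F] {m : ℕ}

theorem jordanBlock_zero_pow_apply (k : ℕ) (i j : Fin m) :
    (jordanBlock m (0 : F) ^ k) i j = if (i : ℕ) + k = j then 1 else 0 := by
  induction k generalizing j with
  | zero => simp [Matrix.one_apply, Fin.ext_iff]
  | succ k ih =>
    rw [pow_succ, Matrix.mul_apply]
    have hterm (l : Fin m) : (jordanBlock m (0 : F) ^ k) i l * jordanBlock m 0 l j =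
        if (l : ℕ) = i + k ∧ (l : ℕ) + 1 = j then 1 else 0 := by
      rw [ih, jordanBlock]
      split_ifs <;> first | (exfalso; omega) | simp
    simp only [hterm]
    by_cases hij : (i : ℕ) + (k + 1) = j
    · rw [if_pos hij,
        Finset.sum_eq_single ⟨(i : ℕ) + k, by omega⟩ (fun l _ hl => ?_) (by simp)]
      · rw [if_pos ⟨rfl, (by omega : (i : ℕ) + k + 1 = j)⟩]
      · rw [if_neg fun h => hl (Fin.ext h.1)]
    · rw [if_neg hij]
      exact Finset.sum_eq_zero fun l _ => if_neg (by omega)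

theorem aeval_jordanBlock_zero_apply (q : F[X]) (i j : Fin m) :
    aeval (jordanBlock m (0 : F)) q i j = if (i : ℕ) ≤ j then q.coeff (j - i) else 0 := by
  rw [aeval_eq_sum_range, Matrix.sum_apply]
  simp only [Matrix.smul_apply, jordanBlock_zero_pow_apply, smul_eq_mul, mul_ite, mul_one,
    mul_zero]
  split_ifs with hij
  · have hcond (k : ℕ) : (i : ℕ) + k = j ↔ k = j - i := by omega
    rw [Finset.sum_congr rfl fun k _ => if_congr (hcond k) rfl rfl,
      Finset.sum_ite_eq', ite_eq_left_iff, Finset.mem_range, not_lt]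
    exact fun hdeg => (coeff_eq_zero_of_natDegree_lt (by omega)).symm
  · exact Finset.sum_eq_zero fun k _ => if_neg (by omega)

theorem aeval_jordanBlock_zero_eq_aeval_iff {q r : F[X]} :
    aeval (jordanBlock m (0 : F)) q = aeval (jordanBlock m 0) r ↔
      ∀ k < m, q.coeff k = r.coeff k := by
  simp only [← Matrix.ext_iff, aeval_jordanBlock_zero_apply]
  constructor
  · intro h k hk
    simpa using h ⟨0, by omega⟩ ⟨k, hk⟩
  · intro h i j
    split_ifs with hij
    exacts [h _ (by omega), rfl]

theorem aeval_jordanBlock_zero_eq_zero_iff {q : F[X]} :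
    aeval (jordanBlock m (0 : F)) q = 0 ↔ ∀ k < m, q.coeff k = 0 := by
  simpa using aeval_jordanBlock_zero_eq_aeval_iff (q := q) (r := 0)

theorem diagonal_mul_sub_mul_diagonal_aeval_jordanBlock_zero_eq_smul_iff (α c : F) (q : F[X]) :
    Matrix.diagonal (fun i : Fin m => α - (i : ℕ)) * aeval (jordanBlock m 0) q -
        aeval (jordanBlock m 0) q * Matrix.diagonal (fun i : Fin m => α - (i : ℕ)) =
      c • aeval (jordanBlock m 0) q ↔
      ∀ k < m, q.coeff k ≠ 0 → (k : F) = c := by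
  simp only [← Matrix.ext_iff, Matrix.diagonal_mul_sub_mul_diagonal_apply, Matrix.smul_apply,
    aeval_jordanBlock_zero_apply, smul_eq_mul]
  constructor
  · intro h k hk hq
    refine mul_right_cancel₀ hq ?_
    simpa using h ⟨0, by omega⟩ ⟨k, hk⟩
  · intro h i j
    split_ifs with hij
    · by_cases hq : q.coeff (j - i) = 0
      · simp [hq]
      · rw [← h _ (by omega) hq, Nat.cast_sub hij]
        ring
    · simp

theorem diagonal_mul_sub_mul_diagonal_aeval_jordanBlock_zero_eq_natCast_smul_iff {p : ℕ}
    [CharP F p] {i : ℕ} (hi : i < p) (α : F) (q : F[X]) :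
    Matrix.diagonal (fun i : Fin m => α - (i : ℕ)) * aeval (jordanBlock m 0) q -
        aeval (jordanBlock m 0) q * Matrix.diagonal (fun i : Fin m => α - (i : ℕ)) =
      (i : F) • aeval (jordanBlock m 0) q ↔
      ∀ k < m, q.coeff k ≠ 0 → k % p = i := by
  simp only [diagonal_mul_sub_mul_diagonal_aeval_jordanBlock_zero_eq_smul_iff,
    CharP.natCast_eq_natCast_iff_mod_eq p hi]

end JordanBlock

theorem stmt18 {F : Type*} [Field F] {p : ℕ} [Fact p.Prime] [CharP F p]
    {m : ℕ} (hm : p < m) (α : F) :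
    letI J : Matrix (Fin m) (Fin m) F := jordanBlock m 0
    letI D : Matrix (Fin m) (Fin m) F :=
      Matrix.diagonal (fun i : Fin m => α - (i : ℕ))
    -- every eigenvalue of ad D on F[J] lies in the prime subfield
    (∀ (c : F) (q : Polynomial F), Polynomial.aeval J q ≠ 0 →
      D * Polynomial.aeval J q - Polynomial.aeval J q * D =
        c • Polynomial.aeval J q →
      ∃ i : ℕ, i < p ∧ c = (i : F)) ∧
    -- every element of the prime subfield is an eigenvalue
    (∀ i : ℕ, i < p → ∃ A : Matrix (Fin m) (Fin m) F,
      (∃ q : Polynomial F, A = Polynomial.aeval J q) ∧ A ≠ 0 ∧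
      D * A - A * D = (i : F) • A) ∧
    -- the eigenspace of i (0 ≤ i < p) is F[J^p]·J^i
    (∀ i : ℕ, i < p → ∀ A : Matrix (Fin m) (Fin m) F,
      ((∃ q : Polynomial F, A = Polynomial.aeval J q) ∧
        D * A - A * D = (i : F) • A) ↔
      ∃ h : Polynomial F, A = Polynomial.aeval (J ^ p) h * J ^ i) := by
  have hp : 0 < p := (Fact.out : p.Prime).pos
  have eigen_iff {i : ℕ} (hi : i < p) :=
    diagonal_mul_sub_mul_diagonal_aeval_jordanBlock_zero_eq_natCast_smul_iff (m := m) hi α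
  refine ⟨fun c q hq hc => ?_, fun i hi => ?_, fun i hi A => ⟨?_, ?_⟩⟩
  · obtain ⟨k, hk, hqk⟩ : ∃ k < m, q.coeff k ≠ 0 := by
      simpa using mt aeval_jordanBlock_zero_eq_zero_iff.mpr hq
    rw [diagonal_mul_sub_mul_diagonal_aeval_jordanBlock_zero_eq_smul_iff] at hc
    exact ⟨k % p, Nat.mod_lt k hp,
      (hc k hk hqk).symm.trans (CharP.natCast_eq_natCast_mod F p k)⟩
  · refine ⟨aeval (jordanBlock m 0) (X ^ i), ⟨_, rfl⟩, ?_, (eigen_iff hi _).mpr ?_⟩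
    · rw [Ne, aeval_jordanBlock_zero_eq_zero_iff]
      exact fun h => by simpa using h i (hi.trans hm)
    · intro k _ hk
      rw [coeff_X_pow, ne_eq, ite_eq_right_iff, not_forall] at hk
      obtain ⟨rfl, -⟩ := hk
      exact Nat.mod_eq_of_lt hi
  · rintro ⟨⟨q, rfl⟩, hq⟩
    rw [eigen_iff hi] at hq
    refine ⟨contract p (divX^[i] q), ?_⟩
    rw [aeval_pow_mul_pow_eq_aeval_expand_mul_X_pow, aeval_jordanBlock_zero_eq_aeval_iff]
    intro k hk
    rw [coeff_expand_contract_divX_iterate_mul_X_pow hi, eq_comm, ite_eq_left_iff]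
    intro hki
    by_contra hqk
    exact hki (hq k hk (Ne.symm hqk))
  · rintro ⟨h, rfl⟩
    rw [aeval_pow_mul_pow_eq_aeval_expand_mul_X_pow]
    refine ⟨⟨_, rfl⟩, (eigen_iff hi _).mpr fun k _ hk => ?_⟩
    rw [coeff_expand_mul_X_pow hi] at hk
    by_contra hki
    exact hk (if_neg hki)
end
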